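/- For any x, x' ∈ ℂ with |x| ≥ x_min > 0 and |x'| ≥ x_min, and any σ > 0, d ∈ ℂ, the Bhattacharyya coefficient B(x,x';σ) = (2·√(|x|²+σ²)·√(|x'|²+σ²))/(|x|²+|x'|²+2σ²) · exp(-|d|²|x-x'|²/(2(|x|²+|x'|²+2σ²))) satisfies B(x,x';σ) ≤ B(x,x';0) · (1 + σ²/x_min²) · exp(|d|²σ²·(|x|+|x'|)²/((|x|²+|x'|²+2σ²)(|x|²+|x'|²))). -/

import Mathlib

open Real Complex

/-- Bhattacharyya coefficient of the Ricean fading channel with specular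
component `d`, inputs `x, x'` and noise standard deviation `σ`. -/
noncomputable def bhatt (d x x' : ℂ) (σ : ℝ) : ℝ :=
  (2 * Real.sqrt (‖x‖ ^ 2 + σ ^ 2) * Real.sqrt (‖x'‖ ^ 2 + σ ^ 2))
      / (‖x‖ ^ 2 + ‖x'‖ ^ 2 + 2 * σ ^ 2)
    * Real.exp (-(‖d‖) ^ 2 * (‖x - x'‖) ^ 2
        / (2 * (‖x‖ ^ 2 + ‖x'‖ ^ 2 + 2 * σ ^ 2)))

/-!
Write `a = ‖x‖`, `b = ‖x'‖`, `Q = a² + b²`. Noise enters `bhatt` in two places. In the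
prefactor, `a² + σ² ≤ a² (1 + σ²/x_min²)` for `a ≥ x_min`, so the numerator grows by at most
`1 + σ²/x_min²`, while the denominator `Q + 2σ²` may be shrunk to `Q`. In the exponent,
`1/Q - 1/(Q + 2σ²) = 2σ²/(Q (Q + 2σ²))`, and `‖x - x'‖ ≤ a + b` bounds the resulting loss.
-/

lemma sq_add_le_sq_mul_one_add_div {a m t : ℝ} (hm : 0 < m) (hma : m ≤ a) (ht : 0 ≤ t) :
    a ^ 2 + t ≤ a ^ 2 * (1 + t / m ^ 2) := by
  calc a ^ 2 + t = a ^ 2 + m ^ 2 * (t / m ^ 2) := by field_simp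
    _ ≤ a ^ 2 + a ^ 2 * (t / m ^ 2) := by gcongr
    _ = a ^ 2 * (1 + t / m ^ 2) := by ring

lemma sqrt_mul_sqrt_le {a b m s : ℝ} (hm : 0 < m) (hma : m ≤ a) (hmb : m ≤ b) (hs : 0 ≤ s) :
    √(a ^ 2 + s) * √(b ^ 2 + s) ≤ a * b * (1 + s / m ^ 2) := by
  have ha : 0 < a := hm.trans_le hma
  have hb : 0 < b := hm.trans_le hmb
  rw [← Real.sqrt_mul (by positivity), Real.sqrt_le_iff]
  refine ⟨by positivity, ?_⟩
  calc (a ^ 2 + s) * (b ^ 2 + s)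
      ≤ (a ^ 2 * (1 + s / m ^ 2)) * (b ^ 2 * (1 + s / m ^ 2)) := by
        gcongr <;> exact sq_add_le_sq_mul_one_add_div hm ‹_› hs
    _ = (a * b * (1 + s / m ^ 2)) ^ 2 := by ring

lemma bhatt_prefactor_le {a b m s : ℝ} (hm : 0 < m) (hma : m ≤ a) (hmb : m ≤ b) (hs : 0 ≤ s) :
    2 * √(a ^ 2 + s) * √(b ^ 2 + s) / (a ^ 2 + b ^ 2 + 2 * s)
      ≤ 2 * a * b / (a ^ 2 + b ^ 2) * (1 + s / m ^ 2) := by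
  have ha : 0 < a := hm.trans_le hma
  have hb : 0 < b := hm.trans_le hmb
  calc 2 * √(a ^ 2 + s) * √(b ^ 2 + s) / (a ^ 2 + b ^ 2 + 2 * s)
      ≤ 2 * (a * b * (1 + s / m ^ 2)) / (a ^ 2 + b ^ 2) := by
        rw [mul_assoc]
        exact div_le_div₀ (by positivity)
          (mul_le_mul_of_nonneg_left (sqrt_mul_sqrt_le hm hma hmb hs) zero_le_two)
          (by positivity) (by linarith)
    _ = 2 * a * b / (a ^ 2 + b ^ 2) * (1 + s / m ^ 2) := by ring

lemma neg_div_le_neg_div_add {k e c Q s : ℝ} (hk : 0 ≤ k) (he : 0 ≤ e) (hec : e ≤ c)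
    (hQ : 0 < Q) (hs : 0 ≤ s) :
    -k * e ^ 2 / (2 * (Q + 2 * s)) ≤ -k * e ^ 2 / (2 * Q) + k * s * c ^ 2 / ((Q + 2 * s) * Q) := by
  have hgap : -k * e ^ 2 / (2 * (Q + 2 * s)) - -k * e ^ 2 / (2 * Q)
      = k * s * e ^ 2 / ((Q + 2 * s) * Q) := by
    field_simp
    ring
  have hec' : k * s * e ^ 2 / ((Q + 2 * s) * Q) ≤ k * s * c ^ 2 / ((Q + 2 * s) * Q) := by
    gcongr
  linarith

lemma bhatt_zero (d x x' : ℂ) :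
    bhatt d x x' 0 = 2 * ‖x‖ * ‖x'‖ / (‖x‖ ^ 2 + ‖x'‖ ^ 2)
      * Real.exp (-(‖d‖) ^ 2 * (‖x - x'‖) ^ 2 / (2 * (‖x‖ ^ 2 + ‖x'‖ ^ 2))) := by
  simp [bhatt, Real.sqrt_sq (norm_nonneg _)]

theorem bhatt_le_noiseless_general (d x x' : ℂ) (σ xmin : ℝ)
    (hxmin : 0 < xmin) (hx : xmin ≤ ‖x‖) (hx' : xmin ≤ ‖x'‖) :
    bhatt d x x' σ ≤ bhatt d x x' 0 * (1 + σ ^ 2 / xmin ^ 2)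
      * Real.exp ((‖d‖) ^ 2 * σ ^ 2
          * (‖x‖ + ‖x'‖) ^ 2
          / ((‖x‖ ^ 2 + ‖x'‖ ^ 2 + 2 * σ ^ 2)
              * (‖x‖ ^ 2 + ‖x'‖ ^ 2))) := by
  have ha : 0 < ‖x‖ := hxmin.trans_le hx
  have hQ : 0 < ‖x‖ ^ 2 + ‖x'‖ ^ 2 := by positivity
  have hexp := Real.exp_le_exp.mpr <| neg_div_le_neg_div_add (sq_nonneg ‖d‖)
    (norm_nonneg (x - x')) (norm_sub_le x x') hQ (sq_nonneg σ)
  rw [Real.exp_add] at hexp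
  rw [bhatt_zero]
  calc bhatt d x x' σ
      ≤ 2 * ‖x‖ * ‖x'‖ / (‖x‖ ^ 2 + ‖x'‖ ^ 2) * (1 + σ ^ 2 / xmin ^ 2) * _ :=
        mul_le_mul (bhatt_prefactor_le hxmin hx hx' (sq_nonneg σ)) hexp (by positivity)
          (by positivity)
    _ = _ := by ring

theorem bhatt_le_noiseless (d x x' : ℂ) (σ xmin : ℝ) (hσ : 0 < σ)
    (hxmin : 0 < xmin) (hx : xmin ≤ ‖x‖) (hx' : xmin ≤ ‖x'‖) :
    bhatt d x x' σ ≤ bhatt d x x' 0 * (1 + σ ^ 2 / xmin ^ 2)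
      * Real.exp ((‖d‖) ^ 2 * σ ^ 2
          * (‖x‖ + ‖x'‖) ^ 2
          / ((‖x‖ ^ 2 + ‖x'‖ ^ 2 + 2 * σ ^ 2)
              * (‖x‖ ^ 2 + ‖x'‖ ^ 2))) :=
  bhatt_le_noiseless_general d x x' σ xmin hxmin hx hx'
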